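/- arXiv:0705.0435 — 2 statements merged into one kernel-verified Lean document; each statement's English description precedes it below -/
import Mathlib

section
/- The optimal consumption cannot be identically zero: if (c,z) is an optimal pair (with a(T)>δ for some δ>0), then c is not the almost-everywhere zero function on [0,T]. -/
/-!
If `c = 0` a.e., switch to a small constant consumption `ε`, keeping `z`. Running utility rises
by a multiple of `ε^(1-θ)`, while terminal assets fall by a multiple of `ε`; as they are
positive, the terminal utility is differentiable there and falls only by `O(ε)`. Since
`1 - θ < 1` the gain wins for small `ε`, and the perturbed pair is still admissible.
-/

open MeasureTheory Set Filter

noncomputable def stateX (x₀ : ℝ) (z : ℝ → ℝ) (t : ℝ) : ℝ :=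
  x₀ + ∫ s in (0:ℝ)..t, z s

noncomputable def stateA (r p ξ a₀ x₀ : ℝ) (w : ℝ → ℝ) (c z : ℝ → ℝ) (t : ℝ) : ℝ :=
  Real.exp (r * t) *
    (a₀ + ∫ s in (0:ℝ)..t,
      (w (stateX x₀ z s) - p * c s - ξ * (z s) ^ 2) * Real.exp (-(r * s)))

noncomputable def obj (ρ r η ξ p θ T a₀ x₀ : ℝ) (w : ℝ → ℝ) (c z : ℝ → ℝ) : ℝ :=
  (∫ t in (0:ℝ)..T, Real.exp (-(ρ * t)) * ((c t) ^ (1 - θ) / (1 - θ) - η * (z t) ^ 2)) +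
    Real.exp (-(ρ * T)) * (stateA r p ξ a₀ x₀ w c z T) ^ (1 - θ) / (1 - θ)

noncomputable def wSup (w : ℝ → ℝ) : ℝ := ⨆ x : ℝ, |w x|

noncomputable def wDerivSup (w : ℝ → ℝ) : ℝ := ⨆ x : ℝ, |deriv w x|

def WageAssumptions (w : ℝ → ℝ) : Prop :=
  ContDiff ℝ 2 w ∧ (∃ M : ℝ, ∀ x : ℝ, |w x| ≤ M) ∧
    (∀ x ∈ Set.Ioo (0:ℝ) 1, 0 < w x) ∧ (∀ x : ℝ, x ∉ Set.Icc (0:ℝ) 1 → w x < 0) ∧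
    (∀ x : ℝ, x ≤ 0 → 0 < deriv w x) ∧ (∀ x : ℝ, 1 ≤ x → deriv w x < 0)

/-- `μ = max_{t,t₀ ∈ [0,T]} e^{(r-ρ)(t-t₀)}` is written as `e^{|r-ρ| T}`. -/
def CapC (ρ r p θ T a₀ C : ℝ) (w : ℝ → ℝ) : Prop :=
  C ^ θ > max 1 (Real.exp (|r - ρ| * T) ^ (1 / θ)) *
    ((a₀ + T * wSup w) / (p * (1 - Real.exp (-(r * T))) / r))

def CapZ (r ξ T Z : ℝ) (w : ℝ → ℝ) : Prop :=
  Z > T * wDerivSup w * Real.exp (r * T) / (2 * ξ)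

def ControlPair (T C Z : ℝ) (c z : ℝ → ℝ) : Prop :=
  Measurable c ∧ Measurable z ∧
    (∀ t ∈ Set.Icc (0:ℝ) T, c t ∈ Set.Icc (0:ℝ) C) ∧
    (∀ t ∈ Set.Icc (0:ℝ) T, |z t| ≤ Z)

def Admissible (r p ξ T a₀ x₀ C Z : ℝ) (w : ℝ → ℝ) (c z : ℝ → ℝ) : Prop :=
  ControlPair T C Z c z ∧ 0 ≤ stateA r p ξ a₀ x₀ w c z T

def Optimal (ρ r η ξ p θ T a₀ x₀ C Z : ℝ) (w : ℝ → ℝ) (c z : ℝ → ℝ) : Prop :=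
  Admissible r p ξ T a₀ x₀ C Z w c z ∧
    ∀ c' z' : ℝ → ℝ, Admissible r p ξ T a₀ x₀ C Z w c' z' →
      obj ρ r η ξ p θ T a₀ x₀ w c' z' ≤ obj ρ r η ξ p θ T a₀ x₀ w c z

open Topology Interval

lemma eventually_lt_mul_rpow_add_of_hasDerivWithinAt {φ : ℝ → ℝ} {φ' s E : ℝ}
    (hφ : HasDerivWithinAt φ φ' (Ioi 0) 0) (hs : s < 1) (hE : 0 < E) :
    ∀ᶠ x in 𝓝[>] 0, φ 0 < E * x ^ s + φ x := by
  have hpow : Tendsto (fun x : ℝ => E * x ^ (s - 1)) (𝓝[>] 0) atTop :=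
    (tendsto_rpow_neg_nhdsGT_zero (by linarith)).const_mul_atTop hE
  have hslope : Tendsto (slope φ 0) (𝓝[>] 0) (𝓝 φ') :=
    (hasDerivWithinAt_iff_tendsto_slope' (lt_irrefl 0)).1 hφ
  filter_upwards [(hpow.atTop_add hslope).eventually_gt_atTop 0, self_mem_nhdsWithin]
    with x hx (hx0 : 0 < x)
  have := mul_pos hx0 hx
  rw [Real.rpow_sub_one hx0.ne', slope_def_field, sub_zero] at this
  field_simp at this
  linarith

lemma integrableOn_Icc_of_abs_le {f : ℝ → ℝ} {a b M : ℝ} (hf : Measurable f)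
    (hM : ∀ x ∈ Icc a b, |f x| ≤ M) : IntegrableOn f (Icc a b) :=
  Measure.integrableOn_of_bounded measure_Icc_lt_top.ne hf.aestronglyMeasurable
    ((ae_restrict_iff' measurableSet_Icc).2 (ae_of_all _ hM))

lemma CapC.pos {ρ r p θ T a₀ C : ℝ} {w : ℝ → ℝ} (hC : CapC ρ r p θ T a₀ C w)
    (hr : 0 < r) (hp : 0 ≤ p) (hT : 0 ≤ T) (ha₀ : 0 ≤ a₀) (hθ : θ ≠ 0) (hC₀ : 0 ≤ C) :
    0 < C := by
  refine hC₀.lt_of_ne fun hCzero => ?_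
  have hwSup : 0 ≤ wSup w := Real.iSup_nonneg fun _ => abs_nonneg _
  have hden : 0 ≤ p * (1 - Real.exp (-(r * T))) / r := by
    have : Real.exp (-(r * T)) ≤ 1 := Real.exp_le_one_iff.2 (by nlinarith)
    exact div_nonneg (mul_nonneg hp (by linarith)) hr.le
  have hrhs : 0 ≤ max 1 (Real.exp (|r - ρ| * T) ^ (1 / θ)) *
      ((a₀ + T * wSup w) / (p * (1 - Real.exp (-(r * T))) / r)) :=
    mul_nonneg (zero_le_one.trans (le_max_left _ _))
      (div_nonneg (add_nonneg ha₀ (mul_nonneg hT hwSup)) hden)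
  rw [CapC, ← hCzero, Real.zero_rpow hθ] at hC
  linarith

section ControlPair

variable {T C Z : ℝ} {c z : ℝ → ℝ}

lemma ControlPair.integrableOn_control (h : ControlPair T C Z c z) :
    IntegrableOn z (Icc 0 T) :=
  integrableOn_Icc_of_abs_le h.2.1 h.2.2.2

lemma ControlPair.integrableOn_control_sq (h : ControlPair T C Z c z) :
    IntegrableOn (fun t => z t ^ 2) (Icc 0 T) :=
  integrableOn_Icc_of_abs_le (h.2.1.pow_const 2) fun t ht => by
    rw [abs_pow]
    exact pow_le_pow_left₀ (abs_nonneg _) (h.2.2.2 t ht) 2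

end ControlPair

lemma continuousOn_stateX {x₀ T : ℝ} {z : ℝ → ℝ} (hz : IntegrableOn z (uIcc 0 T)) :
    ContinuousOn (stateX x₀ z) (uIcc 0 T) :=
  continuousOn_const.add (intervalIntegral.continuousOn_primitive_interval hz)

section Consumption

variable {ρ r η ξ p θ T a₀ x₀ : ℝ} {w : ℝ → ℝ} {c c' z : ℝ → ℝ}

lemma stateA_congr_ae (h : c =ᵐ[volume.restrict (Ι 0 T)] c') :
    stateA r p ξ a₀ x₀ w c z T = stateA r p ξ a₀ x₀ w c' z T := by
  unfold stateA
  congr 2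
  refine intervalIntegral.integral_congr_ae_restrict ?_
  filter_upwards [h] with s hs
  rw [hs]

lemma obj_congr_ae (h : c =ᵐ[volume.restrict (Ι 0 T)] c') :
    obj ρ r η ξ p θ T a₀ x₀ w c z = obj ρ r η ξ p θ T a₀ x₀ w c' z := by
  unfold obj
  rw [stateA_congr_ae h]
  congr 1
  refine intervalIntegral.integral_congr_ae_restrict ?_
  filter_upwards [h] with s hs
  rw [hs]

lemma stateA_const_consumption
    (hint : IntervalIntegrable
      (fun s => (w (stateX x₀ z s) - ξ * z s ^ 2) * Real.exp (-(r * s))) volume 0 T) (ε : ℝ) :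
    stateA r p ξ a₀ x₀ w (fun _ => ε) z T = stateA r p ξ a₀ x₀ w (fun _ => 0) z T
      - ε * (p * Real.exp (r * T) * ∫ s in (0:ℝ)..T, Real.exp (-(r * s))) := by
  have hsplit : ∀ ε : ℝ, (∫ s in (0:ℝ)..T,
      (w (stateX x₀ z s) - p * ε - ξ * z s ^ 2) * Real.exp (-(r * s)))
      = (∫ s in (0:ℝ)..T, (w (stateX x₀ z s) - ξ * z s ^ 2) * Real.exp (-(r * s)))
        - p * ε * ∫ s in (0:ℝ)..T, Real.exp (-(r * s)) := by
    intro ε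
    rw [← intervalIntegral.integral_const_mul, ← intervalIntegral.integral_sub hint
      ((by fun_prop : Continuous fun s => p * ε * Real.exp (-(r * s))).intervalIntegrable 0 T)]
    congr 1 with s
    ring
  simp only [stateA, hsplit]
  ring

lemma obj_const_consumption (hθ : θ ≠ 1)
    (hz : IntervalIntegrable (fun t => z t ^ 2) volume 0 T) (ε : ℝ) :
    obj ρ r η ξ p θ T a₀ x₀ w (fun _ => ε) z = obj ρ r η ξ p θ T a₀ x₀ w (fun _ => 0) z
      + (∫ t in (0:ℝ)..T, Real.exp (-(ρ * t))) / (1 - θ) * ε ^ (1 - θ)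
      + Real.exp (-(ρ * T)) * stateA r p ξ a₀ x₀ w (fun _ => ε) z T ^ (1 - θ) / (1 - θ)
      - Real.exp (-(ρ * T)) * stateA r p ξ a₀ x₀ w (fun _ => 0) z T ^ (1 - θ) / (1 - θ) := by
  have hexp : Continuous fun t : ℝ => Real.exp (-(ρ * t)) := by fun_prop
  have hzero : (fun t => Real.exp (-(ρ * t)) * ((0:ℝ) ^ (1 - θ) / (1 - θ) - η * z t ^ 2))
      = fun t => -η * (z t ^ 2 * Real.exp (-(ρ * t))) := by
    rw [Real.zero_rpow (sub_ne_zero.2 hθ.symm)]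
    ext t
    ring
  have hε : (fun t => Real.exp (-(ρ * t)) * (ε ^ (1 - θ) / (1 - θ) - η * z t ^ 2))
      = fun t => ε ^ (1 - θ) / (1 - θ) * Real.exp (-(ρ * t))
          + -η * (z t ^ 2 * Real.exp (-(ρ * t))) := by
    ext t
    ring
  unfold obj
  rw [hε, hzero, intervalIntegral.integral_add ((hexp.intervalIntegrable 0 T).const_mul _)
    ((hz.mul_continuousOn hexp.continuousOn).const_mul _), intervalIntegral.integral_const_mul]
  ring

end Consumption

lemma intervalIntegrable_wage_integrand {r ξ T C Z x₀ : ℝ} {w c z : ℝ → ℝ}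
    (hw : Continuous w) (h : ControlPair T C Z c z) (hT : 0 ≤ T) :
    IntervalIntegrable
      (fun s => (w (stateX x₀ z s) - ξ * z s ^ 2) * Real.exp (-(r * s))) volume 0 T := by
  have hexp : ContinuousOn (fun s : ℝ => Real.exp (-(r * s))) (uIcc 0 T) := by fun_prop
  have hX := continuousOn_stateX (x₀ := x₀) (uIcc_of_le hT ▸ h.integrableOn_control)
  simp only [sub_mul]
  exact (((hw.comp_continuousOn hX).mul hexp).intervalIntegrable).sub
    (((uIcc_of_le hT ▸ h.integrableOn_control_sq).intervalIntegrable.const_mul ξ).mul_continuousOn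
      hexp)

lemma exists_const_consumption_obj_gt {ρ r η ξ p θ T a₀ x₀ C Z : ℝ} {w c z : ℝ → ℝ}
    (hT : 0 < T) (hθ : θ ∈ Ioo 0 1) (hw : Continuous w) (hpair : ControlPair T C Z c z)
    (hC : 0 < C) (hA : 0 < stateA r p ξ a₀ x₀ w (fun _ => 0) z T) :
    ∃ ε, Admissible r p ξ T a₀ x₀ C Z w (fun _ => ε) z ∧
      obj ρ r η ξ p θ T a₀ x₀ w (fun _ => 0) z < obj ρ r η ξ p θ T a₀ x₀ w (fun _ => ε) z := by
  set A := stateA r p ξ a₀ x₀ w (fun _ => 0) z T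
  set K := p * Real.exp (r * T) * ∫ s in (0:ℝ)..T, Real.exp (-(r * s))
  have hstate : ∀ ε, stateA r p ξ a₀ x₀ w (fun _ => ε) z T = A - ε * K :=
    stateA_const_consumption (intervalIntegrable_wage_integrand hw hpair hT.le)
  have hz2 : IntervalIntegrable (fun t => z t ^ 2) volume 0 T :=
    (uIcc_of_le hT.le ▸ hpair.integrableOn_control_sq).intervalIntegrable
  have hdiscount : 0 < ∫ t in (0:ℝ)..T, Real.exp (-(ρ * t)) :=
    intervalIntegral.intervalIntegral_pos_of_pos
      ((by fun_prop : Continuous fun t : ℝ => Real.exp (-(ρ * t))).intervalIntegrable 0 T)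
      (fun _ => Real.exp_pos _) hT
  have hterminal : DifferentiableAt ℝ
      (fun x => Real.exp (-(ρ * T)) * (A - x * K) ^ (1 - θ) / (1 - θ)) 0 := by
    fun_prop (disch := simp [hA.ne'])
  have hgain := eventually_lt_mul_rpow_add_of_hasDerivWithinAt
    hterminal.hasDerivAt.hasDerivWithinAt (by linarith [hθ.1] : 1 - θ < 1)
    (div_pos hdiscount (sub_pos.2 hθ.2))
  have hsmall : ∀ᶠ x in 𝓝[>] (0:ℝ), x < C ∧ x * K < A :=
    nhdsWithin_le_nhds ((eventually_lt_nhds hC).and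
      (((continuous_mul_const K).tendsto' 0 0 (zero_mul K)).eventually (eventually_lt_nhds hA)))
  obtain ⟨ε, hεgain, ⟨hεC, hεA⟩, hε0 : 0 < ε⟩ :=
    (hgain.and (hsmall.and self_mem_nhdsWithin)).exists
  refine ⟨ε, ⟨⟨measurable_const, hpair.2.1, fun _ _ => ⟨hε0.le, hεC.le⟩, hpair.2.2.2⟩, ?_⟩, ?_⟩
  · rw [hstate]
    linarith
  · rw [obj_const_consumption hθ.2.ne hz2 ε, hstate ε]
    simp only [zero_mul, sub_zero] at hεgain
    linarith

theorem optimal_consumption_not_ae_zero_general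
    (ρ r η ξ p θ T a₀ x₀ C Z δ : ℝ) (w : ℝ → ℝ)
    (hr : 0 < r) (hp : 0 < p) (hT : 0 < T)
    (hθ : θ ∈ Set.Ioo (0:ℝ) 1) (hw : WageAssumptions w)
    (ha₀ : 0 ≤ a₀)
    (hC : CapC ρ r p θ T a₀ C w)
    (c z : ℝ → ℝ) (hopt : Optimal ρ r η ξ p θ T a₀ x₀ C Z w c z)
    (hδ : 0 < δ) (haT : δ < stateA r p ξ a₀ x₀ w c z T) :
    ¬ (∀ᵐ t ∂(volume.restrict (Set.Icc (0:ℝ) T)), c t = 0) := by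
  intro hc
  obtain ⟨⟨hpair, -⟩, hmax⟩ := hopt
  have hc_ae : c =ᵐ[volume.restrict (Ι 0 T)] fun _ => 0 := by
    rw [uIoc_of_le hT.le]
    exact ae_mono (Measure.restrict_mono Ioc_subset_Icc_self le_rfl) hc
  have hCpos : 0 < C := hC.pos hr hp.le hT.le ha₀ hθ.1.ne'
    (nonempty_Icc.1 ⟨_, hpair.2.2.1 0 ⟨le_rfl, hT.le⟩⟩)
  rw [stateA_congr_ae hc_ae] at haT
  obtain ⟨ε, hadm, hgt⟩ :=
    exists_const_consumption_obj_gt hT hθ hw.1.continuous hpair hCpos (hδ.trans haT)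
  exact (hgt.trans_le (hmax _ _ hadm)).ne (obj_congr_ae hc_ae).symm

/-- Proposition: the optimal consumption cannot be identically zero.
If `(c,z)` is optimal (its terminal assets exceed some `δ > 0`), then `c` is
not the almost-everywhere-zero function on `[0,T]`. -/
theorem optimal_consumption_not_ae_zero
    (ρ r η ξ p θ T a₀ x₀ C Z δ : ℝ) (w : ℝ → ℝ)
    (hρ : 0 < ρ) (hr : 0 < r) (hη : 0 < η) (hξ : 0 < ξ) (hp : 0 < p) (hT : 0 < T)
    (hθ : θ ∈ Set.Ioo (0:ℝ) 1) (hw : WageAssumptions w)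
    (ha₀ : 0 ≤ a₀) (hx₀ : x₀ ∈ Set.Icc (0:ℝ) 1)
    (hC : CapC ρ r p θ T a₀ C w) (hZ : CapZ r ξ T Z w)
    (c z : ℝ → ℝ) (hopt : Optimal ρ r η ξ p θ T a₀ x₀ C Z w c z)
    (hδ : 0 < δ) (haT : δ < stateA r p ξ a₀ x₀ w c z T) :
    ¬ (∀ᵐ t ∂(volume.restrict (Set.Icc (0:ℝ) T)), c t = 0) :=
  optimal_consumption_not_ae_zero_general ρ r η ξ p θ T a₀ x₀ C Z δ w hr hp hT hθ hw ha₀ hC c z hopt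
    hδ haT
end

section
/- Let w:ℝ→ℝ be C¹ with w'(x)>0 for x≤0 and w'(x)<0 for x≥1, let G:[0,T]→ℝ be continuous and strictly positive, and let x:[0,T]→ℝ be C¹ with x(0)∈[0,1] and ẋ(t) = G(t)·∫_t^T w'(x(τ))·e^{−rτ} dτ for all t∈[0,T] (r>0). Then x(t)∈[0,1] for all t∈[0,T]. In particular, the optimal trajectory x(t) of the model remains in the interval [0,1], regardless of the particular form of the wage distribution w on [0,1]. -/
open Set MeasureTheory intervalIntegral Filter

/-- Key invariance lemma: if `ẋ(t) = G(t) ∫_t^T f(τ) dτ` with `G > 0`,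
`f` continuous on `[0,T]` and `f(t) > 0` whenever `x(t) ≤ 0`, and `x(0) ≥ 0`,
then `x ≥ 0` on `[0,T]`. -/
lemma stays_nonneg_aux (T : ℝ) (hT : 0 < T) (G x f : ℝ → ℝ)
    (hf : ∀ t ∈ Set.Icc (0:ℝ) T, ContinuousAt f t)
    (hGpos : ∀ t ∈ Set.Icc (0:ℝ) T, 0 < G t)
    (hx : ∀ t ∈ Set.Icc (0:ℝ) T, HasDerivAt x (G t * ∫ τ in t..T, f τ) t)
    (hsign : ∀ t ∈ Set.Icc (0:ℝ) T, x t ≤ 0 → 0 < f t)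
    (hx0 : 0 ≤ x 0) :
    ∀ t ∈ Set.Icc (0:ℝ) T, 0 ≤ x t := by
  by_contra h
  push_neg at h
  obtain ⟨t₁, ht₁, hxt₁⟩ := h
  have hxc : ∀ t ∈ Set.Icc (0:ℝ) T, ContinuousAt x t := fun t ht => (hx t ht).continuousAt
  -- integrability of f on subintervals
  have hint : ∀ u v, u ∈ Set.Icc (0:ℝ) T → v ∈ Set.Icc (0:ℝ) T →
      IntervalIntegrable f volume u v := by
    intro u v hu hv
    apply ContinuousOn.intervalIntegrable
    intro s hs
    have hsub : Set.uIcc u v ⊆ Set.Icc 0 T := by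
      rw [show Set.Icc (0:ℝ) T = Set.uIcc 0 T from (Set.uIcc_of_le hT.le).symm]
      exact Set.uIcc_subset_uIcc (by rw [Set.uIcc_of_le hT.le]; exact hu)
        (by rw [Set.uIcc_of_le hT.le]; exact hv)
    exact (hf s (hsub hs)).continuousWithinAt
  -- positivity of integrals of f over intervals where x ≤ 0
  have hpos_int : ∀ u v, u ∈ Set.Icc (0:ℝ) T → v ∈ Set.Icc (0:ℝ) T → u < v →
      (∀ s ∈ Set.Icc u v, x s ≤ 0) → 0 < ∫ τ in u..v, f τ := by
    intro u v hu hv huv hneg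
    apply intervalIntegral.intervalIntegral_pos_of_pos_on (hint u v hu hv) _ huv
    intro s hs
    exact hsign s ⟨le_trans hu.1 hs.1.le, le_trans hs.2.le hv.2⟩ (hneg s ⟨hs.1.le, hs.2.le⟩)
  have ht₁0 : 0 < t₁ := ht₁.1.lt_of_ne (fun h => by rw [← h] at hxt₁; linarith)
  -- the last time before t₁ with x ≥ 0
  set S : Set ℝ := {t | t ∈ Set.Icc 0 t₁ ∧ 0 ≤ x t} with hSdef
  have hS0 : (0:ℝ) ∈ S := ⟨⟨le_refl 0, ht₁.1⟩, hx0⟩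
  have hSne : S.Nonempty := ⟨0, hS0⟩
  have hSbdd : BddAbove S := ⟨t₁, fun t ht => ht.1.2⟩
  set a := sSup S with hadef
  have ha_le : a ≤ t₁ := csSup_le hSne (fun t ht => ht.1.2)
  have ha0 : (0:ℝ) ≤ a := le_csSup hSbdd hS0
  have haT : a ∈ Set.Icc (0:ℝ) T := ⟨ha0, le_trans ha_le ht₁.2⟩
  have ha_cl : a ∈ closure S := csSup_mem_closure hSne hSbdd
  have hxa : 0 ≤ x a := by
    have h1 := (hxc a haT).continuousWithinAt.mem_closure_image ha_cl
    have hsub : x '' S ⊆ Set.Ici 0 := by rintro _ ⟨t, ht, rfl⟩; exact ht.2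
    have h2 : x a ∈ closure (Set.Ici (0:ℝ)) := closure_mono hsub h1
    simpa using h2
  have ha_lt : a < t₁ := ha_le.lt_of_ne (fun h => by rw [h] at hxa; linarith)
  have hx_neg : ∀ t, a < t → t ≤ t₁ → x t < 0 := by
    intro t hat htt₁
    by_contra hge
    push_neg at hge
    exact absurd (le_csSup hSbdd ⟨⟨le_trans ha0 hat.le, htt₁⟩, hge⟩) (not_le.mpr hat)
  -- mean value theorem on [a, t₁]
  have hcont : ContinuousOn x (Set.Icc a t₁) := fun s hs =>
    (hxc s ⟨le_trans ha0 hs.1, le_trans hs.2 ht₁.2⟩).continuousWithinAt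
  have hderiv : ∀ s ∈ Set.Ioo a t₁, HasDerivAt x (G s * ∫ τ in s..T, f τ) s := fun s hs =>
    hx s ⟨le_trans ha0 hs.1.le, le_trans hs.2.le ht₁.2⟩
  obtain ⟨ξ, hξ, hslope⟩ :=
    exists_hasDerivAt_eq_slope x (fun s => G s * ∫ τ in s..T, f τ) ha_lt hcont hderiv
  have hξT : ξ ∈ Set.Icc (0:ℝ) T := ⟨le_trans ha0 hξ.1.le, le_trans hξ.2.le ht₁.2⟩
  have hslope_neg : (x t₁ - x a) / (t₁ - a) < 0 :=
    div_neg_of_neg_of_pos (by linarith) (by linarith)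
  have hpξ : (∫ τ in ξ..T, f τ) < 0 := by
    by_contra hp
    push_neg at hp
    have := mul_nonneg (hGpos ξ hξT).le hp
    rw [hslope] at this
    linarith
  -- case analysis on whether x ever becomes positive after t₁
  set B : Set ℝ := {t | t ∈ Set.Icc t₁ T ∧ 0 < x t} with hBdef
  by_cases hB : B.Nonempty
  · -- there is a first return to 0 at c
    have hBbdd : BddBelow B := ⟨t₁, fun t ht => ht.1.1⟩
    set c := sInf B with hcdef
    have hct₁ : t₁ ≤ c := le_csInf hB (fun t ht => ht.1.1)
    obtain ⟨b, hb⟩ := hB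
    have hcT : c ≤ T := le_trans (csInf_le hBbdd hb) hb.1.2
    have hcIcc : c ∈ Set.Icc (0:ℝ) T := ⟨le_trans ht₁0.le hct₁, hcT⟩
    have hc_cl : c ∈ closure B := csInf_mem_closure ⟨b, hb⟩ hBbdd
    have hxc_ge : 0 ≤ x c := by
      have h1 := (hxc c hcIcc).continuousWithinAt.mem_closure_image hc_cl
      have hsub : x '' B ⊆ Set.Ici 0 := by rintro _ ⟨t, ht, rfl⟩; exact ht.2.le
      have h2 : x c ∈ closure (Set.Ici (0:ℝ)) := closure_mono hsub h1
      simpa using h2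
    have htc : t₁ < c := hct₁.lt_of_ne (fun h => by rw [← h] at hxc_ge; linarith)
    have hx_le_c : ∀ t, t₁ ≤ t → t < c → x t ≤ 0 := by
      intro t h1 h2
      by_contra hp
      push_neg at hp
      exact absurd (csInf_le hBbdd ⟨⟨h1, le_trans h2.le hcT⟩, hp⟩) (not_le.mpr h2)
    have hxc_le : x c ≤ 0 := by
      have hcl : c ∈ closure (Set.Ico t₁ c) := by
        rw [closure_Ico htc.ne]; exact ⟨hct₁, le_refl c⟩
      have h1 := (hxc c hcIcc).continuousWithinAt.mem_closure_image hcl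
      have hsub : x '' Set.Ico t₁ c ⊆ Set.Iic 0 := by
        rintro _ ⟨t, ht, rfl⟩; exact hx_le_c t ht.1 ht.2
      have h2 : x c ∈ closure (Set.Iic (0:ℝ)) := closure_mono hsub h1
      simpa using h2
    have hxc0 : x c = 0 := le_antisymm hxc_le hxc_ge
    -- derivative at c is nonneg since x > 0 just to the right (along B)
    have hdc := hx c hcIcc
    have hd : 0 ≤ G c * ∫ τ in c..T, f τ := by
      have htend := hasDerivAt_iff_tendsto_slope.mp hdc
      have hne : (nhdsWithin c B).NeBot := mem_closure_iff_nhdsWithin_neBot.mp hc_cl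
      have hmono : nhdsWithin c B ≤ nhdsWithin c {c}ᶜ := by
        apply nhdsWithin_mono
        intro t ht
        simp only [Set.mem_compl_iff, Set.mem_singleton_iff]
        intro h
        have h2 : (0:ℝ) < x t := ht.2
        rw [h, hxc0] at h2
        exact lt_irrefl 0 h2
      have htend' : Tendsto (slope x c) (nhdsWithin c B) (nhds (G c * ∫ τ in c..T, f τ)) :=
        htend.mono_left hmono
      apply ge_of_tendsto htend'
      filter_upwards [self_mem_nhdsWithin] with t ht
      have h2 : (0:ℝ) < x t := ht.2
      have htne : c ≠ t := by
        intro h; rw [← h, hxc0] at h2; exact lt_irrefl 0 h2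
      have htc' : c < t := (csInf_le hBbdd ht).lt_of_ne htne
      rw [slope_def_field]
      apply div_nonneg _ (by linarith)
      rw [hxc0]; linarith
    have hpc : 0 ≤ ∫ τ in c..T, f τ := by
      by_contra hp
      push_neg at hp
      have := mul_neg_of_pos_of_neg (hGpos c hcIcc) hp
      linarith
    have hxle : ∀ s ∈ Set.Icc ξ c, x s ≤ 0 := by
      intro s hs
      by_cases h : s ≤ t₁
      · exact (hx_neg s (lt_of_lt_of_le hξ.1 hs.1) h).le
      · push_neg at h
        rcases eq_or_lt_of_le hs.2 with heq | hlt
        · rw [heq, hxc0]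
        · exact hx_le_c s h.le hlt
    have hsplit : (∫ τ in ξ..T, f τ) = (∫ τ in ξ..c, f τ) + ∫ τ in c..T, f τ :=
      (intervalIntegral.integral_add_adjacent_intervals (hint ξ c hξT hcIcc)
        (hint c T hcIcc ⟨hT.le, le_refl T⟩)).symm
    have hpos := hpos_int ξ c hξT hcIcc (lt_trans hξ.2 htc) hxle
    rw [hsplit] at hpξ
    linarith
  · -- x ≤ 0 on all of [t₁, T], hence on [ξ, T]
    have hxle : ∀ s ∈ Set.Icc ξ T, x s ≤ 0 := by
      intro s hs
      by_cases h : s ≤ t₁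
      · exact (hx_neg s (lt_of_lt_of_le hξ.1 hs.1) h).le
      · push_neg at h
        by_contra hp
        push_neg at hp
        exact hB ⟨s, ⟨h.le, hs.2⟩, hp⟩
    have := hpos_int ξ T hξT ⟨hT.le, le_refl T⟩ (lt_of_lt_of_le hξ.2 ht₁.2) hxle
    linarith

/-- Proposition: let `w` be `C¹` with `w' > 0` on `(-∞,0]` and `w' < 0` on
`[1,∞)`, let `G` be continuous and strictly positive on `[0,T]`, and let `x`
satisfy `ẋ(t) = G(t) ∫_t^T w'(x(τ)) e^{-rτ} dτ` on `[0,T]` with `x(0) ∈ [0,1]`.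
Then `x(t) ∈ [0,1]` for all `t ∈ [0,T]`: the optimal trajectory remains in
`[0,1]` regardless of the form of the wage distribution inside `[0,1]`. -/
theorem optimal_trajectory_stays_in_unit_interval
    (T r : ℝ) (hT : 0 < T) (hr : 0 < r)
    (w G x : ℝ → ℝ)
    (hw : ContDiff ℝ 1 w)
    (hw0 : ∀ s : ℝ, s ≤ 0 → 0 < deriv w s)
    (hw1 : ∀ s : ℝ, 1 ≤ s → deriv w s < 0)
    (hG : ContinuousOn G (Set.Icc (0:ℝ) T))
    (hGpos : ∀ t ∈ Set.Icc (0:ℝ) T, 0 < G t)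
    (hx : ∀ t ∈ Set.Icc (0:ℝ) T,
      HasDerivAt x (G t * ∫ τ in t..T, deriv w (x τ) * Real.exp (-(r * τ))) t)
    (hx0 : x 0 ∈ Set.Icc (0:ℝ) 1) :
    ∀ t ∈ Set.Icc (0:ℝ) T, x t ∈ Set.Icc (0:ℝ) 1 := by
  have hwc : Continuous (deriv w) := hw.continuous_deriv le_rfl
  have hxc : ∀ t ∈ Set.Icc (0:ℝ) T, ContinuousAt x t := fun t ht => (hx t ht).continuousAt
  have hfc : ∀ t ∈ Set.Icc (0:ℝ) T,
      ContinuousAt (fun τ => deriv w (x τ) * Real.exp (-(r * τ))) t := by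
    intro t ht
    exact (hwc.continuousAt.comp (hxc t ht)).mul
      ((Real.continuous_exp.comp (by continuity)).continuousAt)
  -- lower bound
  have hlow := stays_nonneg_aux T hT G x (fun τ => deriv w (x τ) * Real.exp (-(r * τ)))
    hfc hGpos hx
    (fun t _ hle => mul_pos (hw0 _ hle) (Real.exp_pos _)) hx0.1
  -- upper bound via y = 1 - x
  have hupp := stays_nonneg_aux T hT G (fun t => 1 - x t)
    (fun τ => -(deriv w (x τ) * Real.exp (-(r * τ))))
    (fun t ht => (hfc t ht).neg) hGpos
    (fun t ht => by
      have h1 : HasDerivAt (fun s => 1 - x s)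
          (-(G t * ∫ τ in t..T, deriv w (x τ) * Real.exp (-(r * τ)))) t :=
        ((hasDerivAt_const t (1:ℝ)).sub (hx t ht)).congr_deriv (by ring)
      have h2 : (∫ τ in t..T, -(deriv w (x τ) * Real.exp (-(r * τ)))) =
          -(∫ τ in t..T, deriv w (x τ) * Real.exp (-(r * τ))) :=
        intervalIntegral.integral_neg
      rw [h2, mul_neg]
      exact h1)
    (fun t _ hle => by
      have hle' : 1 - x t ≤ 0 := hle
      have h1 : 1 ≤ x t := by linarith
      have h2 := hw1 _ h1
      have h3 := Real.exp_pos (-(r * t))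
      show 0 < -(deriv w (x t) * Real.exp (-(r * t)))
      nlinarith)
    (by simpa using hx0.2)
  intro t ht
  have h : 0 ≤ 1 - x t := hupp t ht
  exact ⟨hlow t ht, by linarith⟩
end
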